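/- The prior π(γ) = B(|γ|+1, p+q−|γ|+1) / 2^{#{j : γ_j^x > 0}} is a probability distribution: the sum of π(γ) over all configurations γ (i.e., over all γ^x ∈ {0,1,2}^p and γ^z ∈ {0,1}^q) equals 1. -/

import Mathlib

open Finset

/-- The Beta function `B(a,b) = ∫₀¹ t^(a-1) (1-t)^(b-1) dt`. -/
noncomputable def Beta (a b : ℝ) : ℝ :=
  ∫ t in (0:ℝ)..1, t ^ (a - 1) * (1 - t) ^ (b - 1)

/-- Number of active (nonzero) components of `γˣ`, i.e. `#{j : γⱼˣ > 0}`. -/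
def nActive {p : ℕ} (γx : Fin p → Fin 3) : ℕ :=
  (univ.filter fun j => 0 < (γx j : ℕ)).card

/-- The number of included predictors `|γ| = #{j : γⱼˣ > 0} + ∑ₖ γₖᶻ`. -/
def gammaSize {p q : ℕ} (γ : (Fin p → Fin 3) × (Fin q → Fin 2)) : ℕ :=
  nActive γ.1 + ∑ k, (γ.2 k : ℕ)

/-- The prior `π(γ) = B(|γ|+1, p+q-|γ|+1) / 2^{#{j : γⱼˣ > 0}}`. -/
noncomputable def prior (p q : ℕ) (γ : (Fin p → Fin 3) × (Fin q → Fin 2)) : ℝ :=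
  Beta ((gammaSize γ : ℝ) + 1) ((p : ℝ) + (q : ℝ) - (gammaSize γ : ℝ) + 1) /
    2 ^ nActive γ.1

/-!
Conditionally on an inclusion probability `t`, let each predictor be included independently
with probability `t`, an included `x`-predictor taking the value `1` or `2` with equal chance.
The probability of `γ` under this product distribution is `t^|γ| (1-t)^(p+q-|γ|) / 2^#{j : γⱼˣ > 0}`,
whose integral over `t ∈ [0, 1]` is `π(γ)`. Each product distribution sums to one, hence so
does its average `π` over `t`.
-/

theorem Beta_natCast_add_one (k m : ℕ) :
    Beta ((k : ℝ) + 1) ((m : ℝ) + 1) = ∫ t in (0 : ℝ)..1, t ^ k * (1 - t) ^ m := by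
  refine intervalIntegral.integral_congr fun t _ => ?_
  simp only [add_sub_cancel_right, Real.rpow_natCast]

noncomputable def stateProb (m : ℕ) (t : ℝ) (c : Fin (m + 1)) : ℝ :=
  if c = 0 then 1 - t else t / m

theorem sum_stateProb {m : ℕ} (hm : m ≠ 0) (t : ℝ) : ∑ c, stateProb m t c = 1 := by
  simp only [stateProb, Fin.sum_univ_succ, ↓reduceIte, Fin.succ_ne_zero, sum_const, card_univ,
    Fintype.card_fin, nsmul_eq_mul]
  rw [mul_div_cancel₀ _ (Nat.cast_ne_zero.mpr hm), sub_add_cancel]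

theorem sum_prod_stateProb {ι : Type*} [Fintype ι] [DecidableEq ι] {m : ℕ} (hm : m ≠ 0)
    (t : ℝ) : ∑ γ : ι → Fin (m + 1), ∏ i, stateProb m t (γ i) = 1 := by
  rw [← Fintype.prod_sum]
  simp [sum_stateProb hm]

theorem prod_stateProb {ι : Type*} [Fintype ι] {m : ℕ} (t : ℝ) (γ : ι → Fin (m + 1)) :
    ∏ i, stateProb m t (γ i) = (1 - t) ^ #{i | γ i = 0} * (t / m) ^ #{i | γ i ≠ 0} := by
  simp only [stateProb]
  rw [prod_ite, prod_const, prod_const]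

theorem continuous_stateProb (m : ℕ) (c : Fin (m + 1)) :
    Continuous fun t => stateProb m t c := by
  unfold stateProb
  split_ifs <;> fun_prop

noncomputable def configProb {p q : ℕ} (t : ℝ) (γ : (Fin p → Fin 3) × (Fin q → Fin 2)) : ℝ :=
  (∏ j, stateProb 2 t (γ.1 j)) * ∏ k, stateProb 1 t (γ.2 k)

theorem sum_configProb (p q : ℕ) (t : ℝ) :
    ∑ γ : (Fin p → Fin 3) × (Fin q → Fin 2), configProb t γ = 1 := by
  simp only [configProb, Fintype.sum_prod_type, ← Fintype.sum_mul_sum,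
    sum_prod_stateProb two_ne_zero, sum_prod_stateProb one_ne_zero, mul_one]

theorem continuous_configProb {p q : ℕ} (γ : (Fin p → Fin 3) × (Fin q → Fin 2)) :
    Continuous fun t => configProb t γ :=
  (continuous_finsetProd _ fun j _ => continuous_stateProb 2 (γ.1 j)).mul
    (continuous_finsetProd _ fun k _ => continuous_stateProb 1 (γ.2 k))

theorem nActive_eq_card_ne_zero {p : ℕ} (γx : Fin p → Fin 3) :
    nActive γx = #{j | γx j ≠ 0} := by
  simp only [nActive, Fin.val_pos_iff, Fin.pos_iff_ne_zero]

theorem sum_val_eq_card_ne_zero {q : ℕ} (γz : Fin q → Fin 2) :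
    ∑ k, (γz k : ℕ) = #{k | γz k ≠ 0} := by
  rw [card_filter]
  exact sum_congr rfl fun k _ => by generalize γz k = c; decide +revert

theorem prior_eq_integral_configProb {p q : ℕ} (γ : (Fin p → Fin 3) × (Fin q → Fin 2)) :
    prior p q γ = ∫ t in (0 : ℝ)..1, configProb t γ := by
  set a := #{j | γ.1 j ≠ 0}
  set b := #{k | γ.2 k ≠ 0}
  have hsize : gammaSize γ = a + b := by
    rw [gammaSize, nActive_eq_card_ne_zero, sum_val_eq_card_ne_zero]
  have hx : #{j | γ.1 j = 0} + a = p := by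
    simpa using card_filter_add_card_filter_not (s := univ) fun j => γ.1 j = 0
  have hz : #{k | γ.2 k = 0} + b = q := by
    simpa using card_filter_add_card_filter_not (s := univ) fun k => γ.2 k = 0
  have hexp : (p : ℝ) + q - gammaSize γ = (#{j | γ.1 j = 0} + #{k | γ.2 k = 0} : ℕ) := by
    rw [hsize, sub_eq_iff_eq_add]
    exact_mod_cast (by omega : p + q = #{j | γ.1 j = 0} + #{k | γ.2 k = 0} + (a + b))
  rw [prior, hexp, Beta_natCast_add_one, nActive_eq_card_ne_zero, hsize,
    ← intervalIntegral.integral_div]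
  refine intervalIntegral.integral_congr fun t _ => ?_
  simp only [configProb, prod_stateProb]
  rw [div_pow, div_pow, pow_add, pow_add]
  push_cast
  field_simp
  ring

/-- The prior `π(γ)` is a probability distribution: it sums to one over all
configurations `γ = (γˣ, γᶻ)` with `γˣ ∈ {0,1,2}^p` and `γᶻ ∈ {0,1}^q`. -/
theorem prior_sums_to_one (p q : ℕ) :
    ∑ γ : (Fin p → Fin 3) × (Fin q → Fin 2), prior p q γ = 1 := by
  calc ∑ γ, prior p q γ
      = ∑ γ, ∫ t in (0 : ℝ)..1, configProb t γ := sum_congr rfl fun γ _ =>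
        prior_eq_integral_configProb γ
    _ = ∫ t in (0 : ℝ)..1, ∑ γ, configProb t γ := (intervalIntegral.integral_finsetSum
        fun γ _ => (continuous_configProb γ).intervalIntegrable 0 1).symm
    _ = 1 := by simp [sum_configProb]
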